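/- For every integer l ≥ 1, the set M_l of pairs ((x₁,y₁), L) with (x₁,y₁) ∈ ℂ² and L a point of the projective line over ℂ (the projectivization of ℂ²), such that for any (equivalently, some) nonzero representative (x₂,y₂) of L one has x₁·y₂ = y₁·x₂ and x₂^l = y₂^l (both conditions are independent of the chosen representative), is in bijection with ℂ × (ℤ/lℤ). -/
import Mathlib


noncomputable section

open Complex

lemma roots_equiv (l : ℕ) (hl : 1 ≤ l) :
    Nonempty ({ζ : ℂ // ζ ^ l = 1} ≃ ZMod l) := by
  haveI : NeZero l := ⟨by omega⟩
  have hω : IsPrimitiveRoot (Complex.exp (2 * Real.pi * Complex.I / l)) l :=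
    Complex.isPrimitiveRoot_exp l (by omega)
  set ω := Complex.exp (2 * Real.pi * Complex.I / l)
  let f : ZMod l → {ζ : ℂ // ζ ^ l = 1} := fun k =>
    ⟨ω ^ k.val, by rw [← pow_mul, mul_comm, pow_mul, hω.pow_eq_one, one_pow]⟩
  have hf : Function.Bijective f := by
    constructor
    · intro a b hab
      have : ω ^ a.val = ω ^ b.val := congrArg Subtype.val hab
      have := hω.pow_inj (ZMod.val_lt a) (ZMod.val_lt b) this
      exact ZMod.val_injective l this
    · rintro ⟨ζ, hζ⟩
      obtain ⟨i, hi, hiζ⟩ := hω.eq_pow_of_pow_eq_one hζ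
      refine ⟨(i : ZMod l), Subtype.ext ?_⟩
      show ω ^ (ZMod.val _) = ζ
      rw [ZMod.val_cast_of_lt hi, hiζ]
  exact ⟨(Equiv.ofBijective f hf).symm⟩

/-- For every `l ≥ 1`, the set `M_l` of pairs `((x₁,y₁), L)` with `(x₁,y₁) ∈ ℂ²` and `L` a
point of the projective line `ℙ(ℂ²)`, such that every nonzero representative `(x₂,y₂)` of
`L` satisfies `x₁·y₂ = y₁·x₂` and `x₂^l = y₂^l`, is in bijection with `ℂ × (ℤ/lℤ)`. -/
theorem stmt_18 (l : ℕ) (hl : 1 ≤ l) :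
    Nonempty
      ({q : (ℂ × ℂ) × Projectivization ℂ (ℂ × ℂ) //
          ∀ (v : ℂ × ℂ) (hv : v ≠ 0), Projectivization.mk ℂ v hv = q.2 →
            q.1.1 * v.2 = q.1.2 * v.1 ∧ v.1 ^ l = v.2 ^ l} ≃
        ℂ × ZMod l) := by
  set M := {q : (ℂ × ℂ) × Projectivization ℂ (ℂ × ℂ) //
          ∀ (v : ℂ × ℂ) (hv : v ≠ 0), Projectivization.mk ℂ v hv = q.2 →
            q.1.1 * v.2 = q.1.2 * v.1 ∧ v.1 ^ l = v.2 ^ l} with hM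
  have hne : ∀ ζ : ℂ, ((1 : ℂ), ζ) ≠ 0 := by
    intro ζ h
    exact one_ne_zero (congrArg Prod.fst h)
  have hg : ∀ p : ℂ × {ζ : ℂ // ζ ^ l = 1},
      (((p.1, p.2.1 * p.1), Projectivization.mk ℂ ((1 : ℂ), p.2.1) (hne _)) :
        (ℂ × ℂ) × Projectivization ℂ (ℂ × ℂ)) ∈ {q : (ℂ × ℂ) × Projectivization ℂ (ℂ × ℂ) |
          ∀ (v : ℂ × ℂ) (hv : v ≠ 0), Projectivization.mk ℂ v hv = q.2 →
            q.1.1 * v.2 = q.1.2 * v.1 ∧ v.1 ^ l = v.2 ^ l} := by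
    rintro ⟨t, ζ, hζ⟩ v hv hmk
    obtain ⟨a, ha⟩ := (Projectivization.mk_eq_mk_iff ℂ v _ hv (hne ζ)).mp hmk
    have ha1 : v.1 = (a : ℂ) := by
      have := congrArg Prod.fst ha
      simpa [Units.smul_def] using this.symm
    have ha2 : v.2 = (a : ℂ) * ζ := by
      have := congrArg Prod.snd ha
      simpa [Units.smul_def, smul_eq_mul] using this.symm
    constructor
    · rw [ha1, ha2]; ring
    · rw [ha1, ha2, mul_pow, hζ, mul_one]
  let g : ℂ × {ζ : ℂ // ζ ^ l = 1} → M := fun p =>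
    ⟨((p.1, p.2.1 * p.1), Projectivization.mk ℂ ((1 : ℂ), p.2.1) (hne _)), hg p⟩
  have hbij : Function.Bijective g := by
    constructor
    · rintro ⟨t, ζ, hζ⟩ ⟨t', ζ', hζ'⟩ h
      have h1 : t = t' := congrArg (fun q : M => q.1.1.1) h
      have h2 : Projectivization.mk ℂ ((1 : ℂ), ζ) (hne _) =
          Projectivization.mk ℂ ((1 : ℂ), ζ') (hne _) := congrArg (fun q : M => q.1.2) h
      obtain ⟨a, ha⟩ := (Projectivization.mk_eq_mk_iff ℂ _ _ _ _).mp h2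
      have ha1 : (a : ℂ) = 1 := by
        have := congrArg Prod.fst ha
        simpa [Units.smul_def] using this
      have ha2 : (a : ℂ) * ζ' = ζ := by
        have := congrArg Prod.snd ha
        simpa [Units.smul_def, smul_eq_mul] using this
      rw [ha1, one_mul] at ha2
      simp [h1, ha2]
    · rintro ⟨q, hq⟩
      set v := q.2.rep with hvdef
      have hv : v ≠ 0 := q.2.rep_nonzero
      obtain ⟨h1, h2⟩ := hq v hv q.2.mk_rep
      have hv1 : v.1 ≠ 0 := by
        intro h0
        apply hv
        have : v.2 ^ l = 0 := by rw [← h2, h0, zero_pow (by omega)]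
        have hv2 : v.2 = 0 := pow_eq_zero_iff (by omega) |>.mp this
        exact Prod.ext h0 hv2
      have hζ : (v.2 / v.1) ^ l = 1 := by
        rw [div_pow, ← h2, div_self (pow_ne_zero _ hv1)]
      refine ⟨(q.1.1, ⟨v.2 / v.1, hζ⟩), ?_⟩
      apply Subtype.ext
      have hsnd : Projectivization.mk ℂ ((1 : ℂ), v.2 / v.1) (hne _) = q.2 := by
        rw [← q.2.mk_rep]
        rw [Projectivization.mk_eq_mk_iff' ℂ _ _ _ hv]
        exact ⟨v.1⁻¹, Prod.ext (by simp [inv_mul_cancel₀ hv1])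
          (by simp [smul_eq_mul, div_eq_inv_mul])⟩
      have hfst2 : v.2 / v.1 * q.1.1 = q.1.2 := by
        field_simp
        linear_combination h1
      exact Prod.ext (Prod.ext rfl hfst2) hsnd
  obtain ⟨e⟩ := roots_equiv l hl
  exact ⟨(Equiv.ofBijective g hbij).symm.trans ((Equiv.refl ℂ).prodCongr e)⟩
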